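/- For all x, y ∈ ℝ with cos x + cos y ≥ 0 one has 5 + cos(2x) − 2(cos x − 2)cos y ≥ 0. Consequently, for F(x) = 1 − cos x and G(y) = 1 − cos y, M(x,y) ≥ 0 for all (x,y) with 0 ≤ (1 − cos x) + (1 − cos y) ≤ 2. -/

import Mathlib

/-!
With `c = cos x` and `d = cos y`, both expressions are nonnegative multiples of the quadratic
`q(c, d) = c² - c d + 2 d + 2`: the first equals `2 q`, and `M` collapses (after eliminating
`sin²` by `sin² = 1 - cos²`) to `(1 - c)² (1 - d)² q`. On the half-plane `c + d ≥ 0` with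
`c ≤ 1`, the coefficient `2 - c` of `d` is positive, so `q ≥ q(c, -c) = 2c² - 2c + 2 > 0`.
The energy bound `H ≤ 2` is exactly `c + d ≥ 0`.
-/

/-- The function `M(x,y)` built from `F` and `G`. -/
noncomputable def Mfun (F G : ℝ → ℝ) (x y : ℝ) : ℝ :=
  (6 * F x * (deriv (deriv F) x) ^ 2 - 3 * (deriv F x) ^ 2 * deriv (deriv F) x
      - 2 * F x * deriv F x * deriv (deriv (deriv F)) x) * G y * (deriv G y) ^ 2
    + F x * (deriv F x) ^ 2 * deriv (deriv F) x
      * ((deriv G y) ^ 2 - 2 * G y * deriv (deriv G) y)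

open Real

lemma sq_sub_mul_add_two_mul_add_two_nonneg {c d : ℝ} (hc : c ≤ 1) (hcd : 0 ≤ c + d) :
    0 ≤ c ^ 2 - c * d + 2 * d + 2 := by
  have hd : (2 - c) * -c ≤ (2 - c) * d := by gcongr <;> linarith
  nlinarith [sq_nonneg (c - 1)]

lemma five_add_cos_two_mul_sub_eq (x y : ℝ) :
    5 + cos (2 * x) - 2 * (cos x - 2) * cos y
      = 2 * (cos x ^ 2 - cos x * cos y + 2 * cos y + 2) := by
  rw [cos_two_mul]
  ring

lemma deriv_one_sub_cos : deriv (fun x : ℝ => 1 - cos x) = sin := by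
  funext t
  rw [deriv_const_sub, Real.deriv_cos, neg_neg]

lemma Mfun_one_sub_cos (x y : ℝ) :
    Mfun (fun x => 1 - cos x) (fun y => 1 - cos y) x y
      = (1 - cos x) ^ 2 * (1 - cos y) ^ 2
        * (cos x ^ 2 - cos x * cos y + 2 * cos y + 2) := by
  simp only [Mfun, deriv_one_sub_cos, Real.deriv_sin, Real.deriv_cos']
  ring_nf
  simp only [sin_sq]
  ring

theorem stmt16 :
    (∀ x y : ℝ, 0 ≤ Real.cos x + Real.cos y →
      0 ≤ 5 + Real.cos (2 * x) - 2 * (Real.cos x - 2) * Real.cos y) ∧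
    (∀ x y : ℝ, 0 ≤ (1 - Real.cos x) + (1 - Real.cos y) →
      (1 - Real.cos x) + (1 - Real.cos y) ≤ 2 →
      0 ≤ Mfun (fun x => 1 - Real.cos x) (fun y => 1 - Real.cos y) x y) := by
  refine ⟨fun x y hxy => ?_, fun x y _ hH => ?_⟩
  · rw [five_add_cos_two_mul_sub_eq]
    have hq := sq_sub_mul_add_two_mul_add_two_nonneg (cos_le_one x) hxy
    positivity
  · have hxy : 0 ≤ cos x + cos y := by linarith
    rw [Mfun_one_sub_cos]
    have hq := sq_sub_mul_add_two_mul_add_two_nonneg (cos_le_one x) hxy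
    positivity
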